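/- (Corollary 3.2.) Let T be a sensor tree on K leaves with path matrices P, N, let R_max be a real number, let π_1,…,π_K be nonnegative real savings, and define the weight vectors w_{p,k}, w_{n,k} ∈ ℝ^{K−1} by (w_{p,k})_j = P_{k,j}·Σ_{l : N_{l,j}=1} π_l and (w_{n,k})_j = N_{k,j}·Σ_{l : P_{l,j}=1} π_l. Then for all real decision values g = (g_1,…,g_{K−1}), the empirical tree risk Σ_{k=1}^{K} (R_max − π_k)·G_k(g) equals R_max − Σ_{k=1}^{K} π_k + max_{k ∈ {1,…,K}} [ Σ_{j=1}^{K−1} (w_{p,k})_j·𝟙_{g_j>0} + (w_{n,k})_j·𝟙_{g_j≤0} ]. -/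

import Mathlib

/-- A full binary tree with leaves labeled by `L` and internal nodes labeled by `I`.
At each internal node, the first child is the negative branch and the second child is the
positive branch. -/
inductive BTree (L I : Type) : Type
  | leaf (k : L) : BTree L I
  | node (j : I) (neg pos : BTree L I) : BTree L I

namespace BTree

variable {L I : Type}

/-- The list of leaf labels of a binary tree. -/
def leaves : BTree L I → List L
  | .leaf k => [k]
  | .node _ t₁ t₂ => t₁.leaves ++ t₂.leaves

/-- The list of internal-node labels of a binary tree. -/
def nodes : BTree L I → List I
  | .leaf _ => []
  | .node j t₁ t₂ => j :: (t₁.nodes ++ t₂.nodes)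

variable [DecidableEq L] [DecidableEq I]

/-- Path matrix `P`: `Pmat T k j = 1` iff internal node `j` lies on the root-to-`k` path
and the path proceeds to the positive child of `j`; it is `0` otherwise. -/
def Pmat : BTree L I → L → I → ℕ
  | .leaf _, _, _ => 0
  | .node j t₁ t₂, k, j' =>
      if k ∈ t₂.leaves then (if j' = j then 1 else 0) + t₂.Pmat k j'
      else if k ∈ t₁.leaves then t₁.Pmat k j'
      else 0

/-- Path matrix `N`: `Nmat T k j = 1` iff internal node `j` lies on the root-to-`k` path
and the path proceeds to the negative child of `j`; it is `0` otherwise. -/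
def Nmat : BTree L I → L → I → ℕ
  | .leaf _, _, _ => 0
  | .node j t₁ t₂, k, j' =>
      if k ∈ t₂.leaves then t₂.Nmat k j'
      else if k ∈ t₁.leaves then (if j' = j then 1 else 0) + t₁.Nmat k j'
      else 0

end BTree

/-- A sensor tree on `K` leaves: a full binary tree whose `K` leaves are labeled bijectively
by `Fin K` and whose `K − 1` internal nodes are labeled bijectively by `Fin (K − 1)`. -/
structure SensorTree (K : ℕ) where
  tree : BTree (Fin K) (Fin (K - 1))
  leaves_nodup : tree.leaves.Nodup
  leaves_complete : ∀ k : Fin K, k ∈ tree.leaves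
  nodes_nodup : tree.nodes.Nodup
  nodes_complete : ∀ j : Fin (K - 1), j ∈ tree.nodes

theorem BTree.elim_of_isEmpty {L I : Type} [IsEmpty L] [IsEmpty I] (t : BTree L I) : False := by
  cases t with
  | leaf k => exact IsEmpty.false k
  | node j _ _ => exact IsEmpty.false j

theorem SensorTree.pos {K : ℕ} (T : SensorTree K) : 0 < K := by
  rcases Nat.eq_zero_or_pos K with h | h
  · subst h
    exact (BTree.elim_of_isEmpty (show BTree (Fin 0) (Fin 0) from T.tree)).elim
  · exact h

theorem SensorTree.univ_nonempty {K : ℕ} (T : SensorTree K) :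
    (Finset.univ : Finset (Fin K)).Nonempty :=
  ⟨⟨0, T.pos⟩, Finset.mem_univ _⟩

/-- The indicator `𝟙_P ∈ {0, 1}` of a proposition `P`, as a real number. -/
noncomputable def ind (P : Prop) [Decidable P] : ℝ := if P then 1 else 0

/-- The leaf state `G_k(g) = ∏_j (𝟙_{g_j>0})^{P_{k,j}} (𝟙_{g_j≤0})^{N_{k,j}}`, indicating
whether the decision values `g` route an example to leaf `k`. -/
noncomputable def leafState {K : ℕ} (T : SensorTree K) (g : Fin (K - 1) → ℝ) (k : Fin K) : ℝ :=
  ∏ j : Fin (K - 1), (ind (0 < g j)) ^ (T.tree.Pmat k j) * (ind (g j ≤ 0)) ^ (T.tree.Nmat k j)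

/-- The weight `(w_{p,k})_j = P_{k,j} · Σ_{l : N_{l,j}=1} π_l`. -/
noncomputable def wp {K : ℕ} (T : SensorTree K) (π : Fin K → ℝ) (k : Fin K)
    (j : Fin (K - 1)) : ℝ :=
  (T.tree.Pmat k j : ℝ) * ∑ l ∈ Finset.univ.filter (fun l => T.tree.Nmat l j = 1), π l

/-- The weight `(w_{n,k})_j = N_{k,j} · Σ_{l : P_{l,j}=1} π_l`. -/
noncomputable def wn {K : ℕ} (T : SensorTree K) (π : Fin K → ℝ) (k : Fin K)
    (j : Fin (K - 1)) : ℝ :=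
  (T.tree.Nmat k j : ℝ) * ∑ l ∈ Finset.univ.filter (fun l => T.tree.Pmat l j = 1), π l

/-! The decision values `g` send every example to one leaf `κ = route g`, so `G_k(g) = [k = κ]`
and the risk is `R_max − π_κ`. The score of leaf `k` is `∑_l π_l c(k, l)`, where `c(k, l) ∈ {0, 1}`
records whether `g` turns toward `k` at the node where the paths to `k` and `l` separate. The
paths to distinct leaves separate at exactly one node, so `c(k, l) + c(l, k) = 1` for `k ≠ l`,
and `c(k, κ) = 0`. Since `π ≥ 0`, every score is therefore at most `∑_{l ≠ κ} π_l`, with equality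
at `k = κ`. -/

theorem ind_nonneg (P : Prop) [Decidable P] : 0 ≤ ind P := by
  unfold ind; split_ifs <;> norm_num

theorem ind_pos_add_ind_nonpos (x : ℝ) : ind (0 < x) + ind (x ≤ 0) = 1 := by
  by_cases h : 0 < x <;> simp [ind, h, not_le.2]

theorem sum_filter_eq_one_eq_sum_mul {α : Type*} {s : Finset α} {f : α → ℕ}
    (hf : ∀ a ∈ s, f a ≤ 1) (π : α → ℝ) :
    ∑ a ∈ s with f a = 1, π a = ∑ a ∈ s, f a * π a := by
  rw [Finset.sum_filter]
  refine Finset.sum_congr rfl fun a ha => ?_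
  rcases Nat.le_one_iff_eq_zero_or_eq_one.1 (hf a ha) with h | h <;> simp [h]

theorem sum_mul_ite_eq_sub {α : Type*} [Fintype α] [DecidableEq α] (π : α → ℝ) (a : α) :
    ∑ l, π l * (if l = a then 0 else 1) = ∑ l, π l - π a := by
  simp [mul_ite, Finset.sum_ite, Finset.filter_ne', Finset.sum_erase_eq_sub]

namespace BTree

variable {L I : Type}

noncomputable def route (g : I → ℝ) : BTree L I → L
  | .leaf k => k
  | .node j t₁ t₂ => if 0 < g j then t₂.route g else t₁.route g

theorem route_node_of_pos {g : I → ℝ} {i : I} (hi : 0 < g i) (t₁ t₂ : BTree L I) :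
    (node i t₁ t₂).route g = t₂.route g := if_pos hi

theorem route_node_of_nonpos {g : I → ℝ} {i : I} (hi : ¬0 < g i) (t₁ t₂ : BTree L I) :
    (node i t₁ t₂).route g = t₁.route g := if_neg hi

theorem route_mem (g : I → ℝ) (t : BTree L I) : t.route g ∈ t.leaves := by
  induction t with
  | leaf k => simp [route, leaves]
  | node j t₁ t₂ ih₁ ih₂ => by_cases h : 0 < g j <;> simp [route, leaves, h, ih₁, ih₂]

theorem leaves_nodup_node {j : I} {t₁ t₂ : BTree L I} (h : (node j t₁ t₂).leaves.Nodup) :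
    t₁.leaves.Nodup ∧ t₂.leaves.Nodup ∧ ∀ k ∈ t₁.leaves, k ∉ t₂.leaves := by
  obtain ⟨h₁, h₂, h₁₂⟩ := List.nodup_append.1 h
  exact ⟨h₁, h₂, fun k hk hk' => h₁₂ k hk k hk' rfl⟩

theorem nodes_nodup_node {j : I} {t₁ t₂ : BTree L I} (h : (node j t₁ t₂).nodes.Nodup) :
    j ∉ t₁.nodes ∧ j ∉ t₂.nodes ∧ t₁.nodes.Nodup ∧ t₂.nodes.Nodup ∧
      ∀ i ∈ t₁.nodes, i ∉ t₂.nodes := by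
  obtain ⟨hj, h⟩ := List.nodup_cons.1 h
  obtain ⟨h₁, h₂, h₁₂⟩ := List.nodup_append.1 h
  simp only [List.mem_append, not_or] at hj
  exact ⟨hj.1, hj.2, h₁, h₂, fun i hi hi' => h₁₂ i hi i hi' rfl⟩

variable [DecidableEq L] [DecidableEq I]

theorem Pmat_eq_zero_of_not_mem_nodes {t : BTree L I} {j : I} (h : j ∉ t.nodes) (k : L) :
    t.Pmat k j = 0 := by
  induction t with
  | leaf => rfl
  | node i t₁ t₂ ih₁ ih₂ =>
    simp only [nodes, List.mem_cons, List.mem_append, not_or] at h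
    simp [Pmat, h.1, ih₁ h.2.1, ih₂ h.2.2]

theorem Nmat_eq_zero_of_not_mem_nodes {t : BTree L I} {j : I} (h : j ∉ t.nodes) (k : L) :
    t.Nmat k j = 0 := by
  induction t with
  | leaf => rfl
  | node i t₁ t₂ ih₁ ih₂ =>
    simp only [nodes, List.mem_cons, List.mem_append, not_or] at h
    simp [Nmat, h.1, ih₁ h.2.1, ih₂ h.2.2]

theorem Pmat_le_one {t : BTree L I} (hN : t.nodes.Nodup) (k : L) (j : I) : t.Pmat k j ≤ 1 := by
  induction t with
  | leaf => simp [Pmat]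
  | node i t₁ t₂ ih₁ ih₂ =>
    obtain ⟨-, hi₂, hN₁, hN₂, -⟩ := nodes_nodup_node hN
    by_cases hji : j = i
    · subst hji
      simp only [Pmat, if_true, Pmat_eq_zero_of_not_mem_nodes hi₂]
      split_ifs <;> simp [ih₁ hN₁]
    · simp only [Pmat, hji, if_false, zero_add]
      split_ifs <;> simp [ih₁ hN₁, ih₂ hN₂]

theorem Nmat_le_one {t : BTree L I} (hN : t.nodes.Nodup) (k : L) (j : I) : t.Nmat k j ≤ 1 := by
  induction t with
  | leaf => simp [Nmat]
  | node i t₁ t₂ ih₁ ih₂ =>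
    obtain ⟨hi₁, -, hN₁, hN₂, -⟩ := nodes_nodup_node hN
    by_cases hji : j = i
    · subst hji
      simp only [Nmat, if_true, Nmat_eq_zero_of_not_mem_nodes hi₁]
      split_ifs <;> simp [ih₂ hN₂]
    · simp only [Nmat, hji, if_false, zero_add]
      split_ifs <;> simp [ih₁ hN₁, ih₂ hN₂]

theorem Pmat_route_eq_zero {t : BTree L I} (hL : t.leaves.Nodup) {g : I → ℝ} {j : I}
    (hj : g j ≤ 0) : t.Pmat (t.route g) j = 0 := by
  induction t with
  | leaf => rfl
  | node i t₁ t₂ ih₁ ih₂ =>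
    obtain ⟨hL₁, hL₂, hdisj⟩ := leaves_nodup_node hL
    by_cases hi : 0 < g i
    · have hji : j ≠ i := by rintro rfl; linarith
      simp [route_node_of_pos hi, Pmat, route_mem, hji, ih₂ hL₂]
    · simp [route_node_of_nonpos hi, Pmat, route_mem, hdisj _ (route_mem g t₁), ih₁ hL₁]

theorem Nmat_route_eq_zero {t : BTree L I} (hL : t.leaves.Nodup) {g : I → ℝ} {j : I}
    (hj : 0 < g j) : t.Nmat (t.route g) j = 0 := by
  induction t with
  | leaf => rfl
  | node i t₁ t₂ ih₁ ih₂ =>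
    obtain ⟨hL₁, hL₂, hdisj⟩ := leaves_nodup_node hL
    by_cases hi : 0 < g i
    · simp [route_node_of_pos hi, Nmat, route_mem, ih₂ hL₂]
    · have hji : j ≠ i := by rintro rfl; exact hi hj
      simp [route_node_of_nonpos hi, Nmat, route_mem, hdisj _ (route_mem g t₁), hji, ih₁ hL₁]

section Fintype

variable [Fintype I]

def splitCount (t : BTree L I) (k l : L) : ℕ :=
  ∑ j, (t.Pmat k j * t.Nmat l j + t.Nmat k j * t.Pmat l j)

theorem splitCount_comm (t : BTree L I) (k l : L) : t.splitCount k l = t.splitCount l k :=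
  Finset.sum_congr rfl fun _ _ => by ring

theorem prod_ind_pow_eq_ite_route {t : BTree L I} (hL : t.leaves.Nodup)
    (g : I → ℝ) {k : L} (hk : k ∈ t.leaves) :
    ∏ j, ind (0 < g j) ^ t.Pmat k j * ind (g j ≤ 0) ^ t.Nmat k j
      = if k = t.route g then 1 else 0 := by
  induction t with
  | leaf k' => simp_all [leaves, Pmat, Nmat, route]
  | node i t₁ t₂ ih₁ ih₂ =>
    obtain ⟨hL₁, hL₂, hdisj⟩ := leaves_nodup_node hL
    rcases List.mem_append.1 hk with hk₁ | hk₂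
    · have hk₂ := hdisj k hk₁
      have hsplit : ∀ j, ind (0 < g j) ^ (node i t₁ t₂).Pmat k j
            * ind (g j ≤ 0) ^ (node i t₁ t₂).Nmat k j
          = ind (0 < g j) ^ t₁.Pmat k j * ind (g j ≤ 0) ^ t₁.Nmat k j
            * if j = i then ind (g j ≤ 0) else 1 := by
        intro j
        by_cases hji : j = i
        · simp [Pmat, Nmat, hk₁, hk₂, hji, pow_add]; ring
        · simp [Pmat, Nmat, hk₁, hk₂, hji]
      rw [Finset.prod_congr rfl fun j _ => hsplit j, Finset.prod_mul_distrib, ih₁ hL₁ hk₁,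
        Finset.prod_ite_eq', if_pos (Finset.mem_univ i)]
      by_cases hi : 0 < g i
      · have hkr : k ≠ t₂.route g := fun h => hk₂ (h ▸ route_mem g t₂)
        simp [route_node_of_pos hi, hkr, ind, hi]
      · simp [route_node_of_nonpos hi, ind, le_of_not_gt hi]
    · have hsplit : ∀ j, ind (0 < g j) ^ (node i t₁ t₂).Pmat k j
            * ind (g j ≤ 0) ^ (node i t₁ t₂).Nmat k j
          = ind (0 < g j) ^ t₂.Pmat k j * ind (g j ≤ 0) ^ t₂.Nmat k j
            * if j = i then ind (0 < g j) else 1 := by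
        intro j
        by_cases hji : j = i
        · simp [Pmat, Nmat, hk₂, hji, pow_add]; ring
        · simp [Pmat, Nmat, hk₂, hji]
      rw [Finset.prod_congr rfl fun j _ => hsplit j, Finset.prod_mul_distrib, ih₂ hL₂ hk₂,
        Finset.prod_ite_eq', if_pos (Finset.mem_univ i)]
      by_cases hi : 0 < g i
      · simp [route_node_of_pos hi, ind, hi]
      · have hkr : k ≠ t₁.route g := fun h => hdisj k (h ▸ route_mem g t₁) hk₂
        simp [route_node_of_nonpos hi, hkr, ind, hi]

theorem splitCount_node_of_mem_left {i : I} {t₁ t₂ : BTree L I} (hi : i ∉ t₁.nodes) {k l : L}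
    (hk₁ : k ∈ t₁.leaves) (hk₂ : k ∉ t₂.leaves) (hl₁ : l ∈ t₁.leaves) (hl₂ : l ∉ t₂.leaves) :
    (node i t₁ t₂).splitCount k l = t₁.splitCount k l := by
  have hterm : ∀ j, (node i t₁ t₂).Pmat k j * (node i t₁ t₂).Nmat l j
        + (node i t₁ t₂).Nmat k j * (node i t₁ t₂).Pmat l j
      = t₁.Pmat k j * t₁.Nmat l j + t₁.Nmat k j * t₁.Pmat l j
        + if j = i then t₁.Pmat k j + t₁.Pmat l j else 0 := by
    intro j
    by_cases hji : j = i
    · simp [Pmat, Nmat, hk₁, hk₂, hl₁, hl₂, hji]; ring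
    · simp [Pmat, Nmat, hk₁, hk₂, hl₁, hl₂, hji]
  simp [splitCount, hterm, Finset.sum_add_distrib, Pmat_eq_zero_of_not_mem_nodes hi]

theorem splitCount_node_of_mem_right {i : I} {t₁ t₂ : BTree L I} (hi : i ∉ t₂.nodes) {k l : L}
    (hk : k ∈ t₂.leaves) (hl : l ∈ t₂.leaves) :
    (node i t₁ t₂).splitCount k l = t₂.splitCount k l := by
  have hterm : ∀ j, (node i t₁ t₂).Pmat k j * (node i t₁ t₂).Nmat l j
        + (node i t₁ t₂).Nmat k j * (node i t₁ t₂).Pmat l j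
      = t₂.Pmat k j * t₂.Nmat l j + t₂.Nmat k j * t₂.Pmat l j
        + if j = i then t₂.Nmat l j + t₂.Nmat k j else 0 := by
    intro j
    by_cases hji : j = i
    · simp [Pmat, Nmat, hk, hl, hji]; ring
    · simp [Pmat, Nmat, hk, hl, hji]
  simp [splitCount, hterm, Finset.sum_add_distrib, Nmat_eq_zero_of_not_mem_nodes hi]

theorem splitCount_node_of_mem_left_right {i : I} {t₁ t₂ : BTree L I}
    (hN : (node i t₁ t₂).nodes.Nodup) {k l : L}
    (hk₁ : k ∈ t₁.leaves) (hk₂ : k ∉ t₂.leaves) (hl : l ∈ t₂.leaves) :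
    (node i t₁ t₂).splitCount k l = 1 := by
  obtain ⟨hi₁, hi₂, -, -, hdisj⟩ := nodes_nodup_node hN
  have hterm : ∀ j, (node i t₁ t₂).Pmat k j * (node i t₁ t₂).Nmat l j
        + (node i t₁ t₂).Nmat k j * (node i t₁ t₂).Pmat l j = if j = i then 1 else 0 := by
    intro j
    by_cases hji : j = i
    · subst hji
      simp [Pmat, Nmat, hk₁, hk₂, hl, Pmat_eq_zero_of_not_mem_nodes hi₁,
        Nmat_eq_zero_of_not_mem_nodes hi₁, Pmat_eq_zero_of_not_mem_nodes hi₂]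
    · by_cases hj₁ : j ∈ t₁.nodes
      · simp [Pmat, Nmat, hk₁, hk₂, hl, hji, Pmat_eq_zero_of_not_mem_nodes (hdisj j hj₁),
          Nmat_eq_zero_of_not_mem_nodes (hdisj j hj₁)]
      · simp [Pmat, Nmat, hk₁, hk₂, hl, hji, Pmat_eq_zero_of_not_mem_nodes hj₁,
          Nmat_eq_zero_of_not_mem_nodes hj₁]
  simp [splitCount, hterm]

theorem splitCount_eq {t : BTree L I} (hL : t.leaves.Nodup) (hN : t.nodes.Nodup) {k l : L}
    (hk : k ∈ t.leaves) (hl : l ∈ t.leaves) : t.splitCount k l = if k = l then 0 else 1 := by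
  induction t with
  | leaf => simp_all [leaves, splitCount, Pmat, Nmat]
  | node i t₁ t₂ ih₁ ih₂ =>
    obtain ⟨hL₁, hL₂, hdisj⟩ := leaves_nodup_node hL
    obtain ⟨hi₁, hi₂, hN₁, hN₂, -⟩ := nodes_nodup_node hN
    rcases List.mem_append.1 hk with hk₁ | hk₂ <;> rcases List.mem_append.1 hl with hl₁ | hl₂
    · rw [splitCount_node_of_mem_left hi₁ hk₁ (hdisj k hk₁) hl₁ (hdisj l hl₁),
        ih₁ hL₁ hN₁ hk₁ hl₁]
    · have hkl : k ≠ l := fun h => hdisj k hk₁ (h ▸ hl₂)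
      rw [splitCount_node_of_mem_left_right hN hk₁ (hdisj k hk₁) hl₂, if_neg hkl]
    · have hkl : k ≠ l := fun h => hdisj l hl₁ (h ▸ hk₂)
      rw [splitCount_comm, splitCount_node_of_mem_left_right hN hl₁ (hdisj l hl₁) hk₂, if_neg hkl]
    · rw [splitCount_node_of_mem_right hi₂ hk₂ hl₂, ih₂ hL₂ hN₂ hk₂ hl₂]

/-- `1` if `g` turns toward `k` at the node where the paths to `k` and `l` separate, else `0`. -/
noncomputable def towards (t : BTree L I) (g : I → ℝ) (k l : L) : ℝ :=
  ∑ j, (((t.Pmat k j * t.Nmat l j : ℕ) : ℝ) * ind (0 < g j)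
    + ((t.Nmat k j * t.Pmat l j : ℕ) : ℝ) * ind (g j ≤ 0))

theorem towards_nonneg (t : BTree L I) (g : I → ℝ) (k l : L) : 0 ≤ t.towards g k l :=
  Finset.sum_nonneg fun j _ => by
    have := ind_nonneg (0 < g j)
    have := ind_nonneg (g j ≤ 0)
    positivity

theorem towards_add_towards (t : BTree L I) (g : I → ℝ) (k l : L) :
    t.towards g k l + t.towards g l k = t.splitCount k l := by
  rw [towards, towards, ← Finset.sum_add_distrib, splitCount, Nat.cast_sum]
  refine Finset.sum_congr rfl fun j _ => ?_
  push_cast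
  linear_combination ((t.Pmat k j : ℝ) * t.Nmat l j + t.Nmat k j * t.Pmat l j)
    * ind_pos_add_ind_nonpos (g j)

theorem towards_route {t : BTree L I} (hL : t.leaves.Nodup) (g : I → ℝ) (k : L) :
    t.towards g k (t.route g) = 0 :=
  Finset.sum_eq_zero fun j _ => by
    by_cases hj : 0 < g j
    · simp [Nmat_route_eq_zero hL hj, ind, hj]
    · simp [Pmat_route_eq_zero hL (le_of_not_gt hj), ind, hj]

theorem towards_le_one {t : BTree L I} (hL : t.leaves.Nodup) (hN : t.nodes.Nodup) (g : I → ℝ)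
    {k l : L} (hk : k ∈ t.leaves) (hl : l ∈ t.leaves) : t.towards g k l ≤ 1 := by
  have hsum := t.towards_add_towards g k l
  have hle : (t.splitCount k l : ℝ) ≤ 1 := by
    rw [splitCount_eq hL hN hk hl]
    split_ifs <;> norm_num
  linarith [t.towards_nonneg g l k]

theorem route_towards {t : BTree L I} (hL : t.leaves.Nodup) (hN : t.nodes.Nodup) (g : I → ℝ)
    {l : L} (hl : l ∈ t.leaves) : t.towards g (t.route g) l = if l = t.route g then 0 else 1 := by
  have hsum := t.towards_add_towards g (t.route g) l
  rw [towards_route hL, add_zero, splitCount_eq hL hN (route_mem g t) hl] at hsum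
  rw [hsum]
  rcases eq_or_ne l (t.route g) with h | h
  · rw [if_pos h, if_pos h.symm, Nat.cast_zero]
  · rw [if_neg h, if_neg h.symm, Nat.cast_one]

variable [Fintype L]

theorem sum_mul_towards_le {t : BTree L I} (hL : t.leaves.Nodup) (hN : t.nodes.Nodup)
    (hcover : ∀ l, l ∈ t.leaves) (g : I → ℝ) {π : L → ℝ} (hπ : ∀ l, 0 ≤ π l) (k : L) :
    ∑ l, π l * t.towards g k l ≤ ∑ l, π l - π (t.route g) := by
  calc ∑ l, π l * t.towards g k l ≤ ∑ l, π l * if l = t.route g then 0 else 1 := by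
        refine Finset.sum_le_sum fun l _ => mul_le_mul_of_nonneg_left ?_ (hπ l)
        split_ifs with h
        · rw [h, towards_route hL]
        · exact towards_le_one hL hN g (hcover k) (hcover l)
    _ = ∑ l, π l - π (t.route g) := sum_mul_ite_eq_sub π _

theorem sum_mul_route_towards {t : BTree L I} (hL : t.leaves.Nodup) (hN : t.nodes.Nodup)
    (hcover : ∀ l, l ∈ t.leaves) (g : I → ℝ) (π : L → ℝ) :
    ∑ l, π l * t.towards g (t.route g) l = ∑ l, π l - π (t.route g) := by
  simp_rw [route_towards hL hN g (hcover _)]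
  exact sum_mul_ite_eq_sub π _

end Fintype

end BTree

theorem leafState_eq {K : ℕ} (T : SensorTree K) (g : Fin (K - 1) → ℝ) (k : Fin K) :
    leafState T g k = if k = T.tree.route g then 1 else 0 :=
  BTree.prod_ind_pow_eq_ite_route T.leaves_nodup g (T.leaves_complete k)

theorem sum_wp_mul_ind_add_wn_mul_ind {K : ℕ} (T : SensorTree K) (π : Fin K → ℝ)
    (g : Fin (K - 1) → ℝ) (k : Fin K) :
    ∑ j, (wp T π k j * ind (0 < g j) + wn T π k j * ind (g j ≤ 0))
      = ∑ l, π l * T.tree.towards g k l := by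
  have hN := T.nodes_nodup
  simp only [wp, wn, BTree.towards, Finset.mul_sum, Finset.sum_mul, ← Finset.sum_add_distrib,
    sum_filter_eq_one_eq_sum_mul (fun l _ => BTree.Nmat_le_one hN l _),
    sum_filter_eq_one_eq_sum_mul (fun l _ => BTree.Pmat_le_one hN l _)]
  rw [Finset.sum_comm]
  refine Finset.sum_congr rfl fun l _ => Finset.sum_congr rfl fun j _ => ?_
  push_cast
  ring

/-- **Corollary 3.2.** The empirical tree risk `Σ_k (R_max − π_k)·G_k(g)` equals
`R_max − Σ_k π_k` plus the maximum over leaves of the weighted indicator terms. -/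
theorem tree_risk_eq_max_form {K : ℕ} (T : SensorTree K) (Rmax : ℝ) (π : Fin K → ℝ)
    (hπ : ∀ k, 0 ≤ π k) (g : Fin (K - 1) → ℝ) :
    ∑ k : Fin K, (Rmax - π k) * leafState T g k
      = Rmax - ∑ k : Fin K, π k
        + Finset.univ.sup' T.univ_nonempty
            (fun k => ∑ j : Fin (K - 1),
              (wp T π k j * ind (0 < g j) + wn T π k j * ind (g j ≤ 0))) := by
  have hrisk : ∑ k, (Rmax - π k) * leafState T g k = Rmax - π (T.tree.route g) := by
    simp [leafState_eq, mul_ite]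
  have hmax : Finset.univ.sup' T.univ_nonempty
      (fun k => ∑ j, (wp T π k j * ind (0 < g j) + wn T π k j * ind (g j ≤ 0)))
        = ∑ l, π l - π (T.tree.route g) := by
    simp_rw [sum_wp_mul_ind_add_wn_mul_ind]
    exact le_antisymm
      (Finset.sup'_le _ _ fun k _ => BTree.sum_mul_towards_le T.leaves_nodup T.nodes_nodup
        T.leaves_complete g hπ k)
      (Finset.le_sup'_of_le _ (Finset.mem_univ _) (BTree.sum_mul_route_towards T.leaves_nodup
        T.nodes_nodup T.leaves_complete g π).ge)
  rw [hrisk, hmax]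
  ring
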